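/- arXiv:1606.03806 — 2 statements merged into one kernel-verified Lean document; each statement's English description precedes it below -/
import Mathlib

section
/- Let ρ₂ be a complex number with Re(ρ₂) > 1 and ζ(ρ₂) = 1, and suppose ρ₂ is an isolated zero of s ↦ ζ(s) − 1 (which holds automatically since ζ − 1 is a nonzero holomorphic function). Then for every ε > 0 there exists a pair (s₁, s₂) with ζ₂(s₁, s₂) = 0 and |s₂ − ρ₂| < ε. (One may take Re(s₁) arbitrarily large.) -/
/-!
For `Re s₁ ≥ 2` the double series splits as `ζ₂(s₁, s₂) = (ζ(s₂) - 1) + T(s₁, s₂)`, the first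
term being the row `n₁ = 1`, and `|T(s₁, s₂)| ≤ 2 ^ (2 - Re s₁) · C(σ)` uniformly on
`Re s₂ ≥ σ > 1`. Since `ρ₂` is an isolated zero of `ζ - 1` (identity theorem on `ℂ \ {1}`,
and `ζ(2) = π² / 6 ≠ 1`), `|ζ - 1| ≥ c > 0` on a small circle around `ρ₂`. Taking `Re s₁` so
large that `|T| < c / 2`, the function `ζ₂(s₁, ·)` is smaller in modulus at `ρ₂` than anywhere on
the circle, so by the minimum modulus principle it vanishes inside the disc.
-/

noncomputable def zeta2term (s₁ s₂ : ℂ) (n : ℕ × ℕ) : ℂ :=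
  ((n.1 : ℂ) + 1) ^ (-s₁) * ((n.1 : ℂ) + (n.2 : ℂ) + 2) ^ (-s₂)

noncomputable def zeta2 (s₁ s₂ : ℂ) : ℂ := ∑' n : ℕ × ℕ, zeta2term s₁ s₂ n

open Complex Metric Filter Topology

section ZerosOfHolomorphicFunctions

variable {f g : ℂ → ℂ} {z₀ : ℂ} {r : ℝ}

/-- Minimum modulus principle: otherwise `f⁻¹` would violate the maximum modulus principle. -/
theorem exists_mem_closedBall_eq_zero_of_norm_lt_sphere {m : ℝ} (hr : 0 < r)
    (hf : DiffContOnCl ℂ f (ball z₀ r)) (hz₀ : ‖f z₀‖ < m)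
    (hm : ∀ z ∈ sphere z₀ r, m ≤ ‖f z‖) : ∃ z ∈ closedBall z₀ r, f z = 0 := by
  by_contra! hne
  rw [← closure_ball z₀ hr.ne'] at hne
  have hz₀ne := hne z₀ (subset_closure (mem_ball_self hr))
  have hm₀ : 0 < m := (norm_nonneg _).trans_lt hz₀
  have hinv : ‖(f z₀)⁻¹‖ ≤ m⁻¹ := by
    refine Complex.norm_le_of_forall_mem_frontier_norm_le isBounded_ball (hf.inv hne)
      (fun z hz ↦ ?_) (subset_closure (mem_ball_self hr))
    rw [frontier_ball z₀ hr.ne'] at hz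
    rw [Pi.inv_apply, norm_inv]
    exact inv_anti₀ hm₀ (hm z hz)
  rw [norm_inv, inv_le_inv₀ (norm_pos_iff.mpr hz₀ne) hm₀] at hinv
  exact hinv.not_gt hz₀

/-- A weak form of Rouché's theorem. -/
theorem exists_mem_closedBall_eq_zero_of_norm_sub_lt {c : ℝ} (hr : 0 < r)
    (hf : DiffContOnCl ℂ f (ball z₀ r)) (hg : g z₀ = 0) (hgc : ∀ z ∈ sphere z₀ r, c ≤ ‖g z‖)
    (hfg : ∀ z ∈ closedBall z₀ r, ‖f z - g z‖ < c / 2) : ∃ z ∈ closedBall z₀ r, f z = 0 := by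
  refine exists_mem_closedBall_eq_zero_of_norm_lt_sphere hr hf (m := c / 2) ?_ fun z hz ↦ ?_
  · simpa [hg] using hfg z₀ (mem_closedBall_self hr.le)
  · linarith [hgc z hz, hfg z (sphere_subset_closedBall hz), norm_le_norm_add_norm_sub (f z) (g z)]

end ZerosOfHolomorphicFunctions

theorem exists_closedBall_subset_forall_sphere_le_norm {X F : Type*} [MetricSpace X] [ProperSpace X]
    [NormedAddCommGroup F] {g : X → F} {x₀ : X} {U : Set X} (hU : U ∈ 𝓝 x₀)
    (hg : ContinuousOn g U) (hne : ∀ᶠ x in 𝓝[≠] x₀, g x ≠ 0) {ε : ℝ} (hε : 0 < ε) :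
    ∃ r, 0 < r ∧ r < ε ∧ closedBall x₀ r ⊆ U ∧ ∃ c > 0, ∀ x ∈ sphere x₀ r, c ≤ ‖g x‖ := by
  obtain ⟨δ, hδ, hball⟩ := Metric.eventually_nhds_iff_ball.mp
    ((eventually_nhdsWithin_iff.mp hne).and hU)
  set r := min (δ / 2) (ε / 2)
  have hr : 0 < r := by positivity
  have hrδ : closedBall x₀ r ⊆ ball x₀ δ :=
    closedBall_subset_ball (by linarith [min_le_left (δ / 2) (ε / 2)])
  have hrU : closedBall x₀ r ⊆ U := fun x hx ↦ (hball x (hrδ hx)).2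
  refine ⟨r, hr, by linarith [min_le_right (δ / 2) (ε / 2)], hrU, ?_⟩
  obtain ⟨c, hc, hcle⟩ := (isCompact_sphere x₀ r).exists_forall_le'
    (hg.mono (sphere_subset_closedBall.trans hrU)).norm (a := 0) fun x hx ↦
      norm_pos_iff.mpr ((hball x (hrδ (sphere_subset_closedBall hx))).1
        (ne_of_mem_sphere hx hr.ne'))
  exact ⟨c, hc, hcle⟩

theorem norm_zeta2term (s₁ s₂ : ℂ) (n : ℕ × ℕ) :
    ‖zeta2term s₁ s₂ n‖
      = ((n.1 : ℝ) + 1) ^ (-s₁.re) * ((n.1 : ℝ) + n.2 + 2) ^ (-s₂.re) := by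
  have h₁ : (n.1 : ℂ) + 1 = ((n.1 + 1 : ℝ) : ℂ) := by push_cast; rfl
  have h₂ : (n.1 : ℂ) + n.2 + 2 = ((n.1 + n.2 + 2 : ℝ) : ℂ) := by push_cast; rfl
  rw [zeta2term, norm_mul, h₁, h₂, norm_cpow_eq_rpow_re_of_pos (by positivity),
    norm_cpow_eq_rpow_re_of_pos (by positivity), neg_re, neg_re]

theorem norm_zeta2term_le {s₁ s₂ : ℂ} {σ : ℝ} (hσ : 0 ≤ σ) (h₂ : σ ≤ s₂.re) (n : ℕ × ℕ) :
    ‖zeta2term s₁ s₂ n‖ ≤ ((n.1 : ℝ) + 1) ^ (-s₁.re) * ((n.2 : ℝ) + 1) ^ (-σ) := by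
  have hn₁ : (0 : ℝ) ≤ n.1 := n.1.cast_nonneg
  rw [norm_zeta2term]
  gcongr ((n.1 : ℝ) + 1) ^ (-s₁.re) * ?_
  calc ((n.1 : ℝ) + n.2 + 2) ^ (-s₂.re)
      ≤ ((n.1 : ℝ) + n.2 + 2) ^ (-σ) :=
        Real.rpow_le_rpow_of_exponent_le (by linarith) (by linarith)
    _ ≤ ((n.2 : ℝ) + 1) ^ (-σ) :=
        Real.rpow_le_rpow_of_nonpos (by positivity) (by linarith) (by linarith)

theorem summable_add_one_rpow_neg {a : ℝ} (ha : 1 < a) :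
    Summable fun n : ℕ ↦ ((n : ℝ) + 1) ^ (-a) := by
  simpa using (summable_nat_add_iff 1).mpr (Real.summable_nat_rpow.mpr (neg_lt_neg ha))

theorem summable_add_one_rpow_neg_mul {a σ : ℝ} (ha : 1 < a) (hσ : 1 < σ) :
    Summable fun n : ℕ × ℕ ↦ ((n.1 : ℝ) + 1) ^ (-a) * ((n.2 : ℝ) + 1) ^ (-σ) :=
  (summable_add_one_rpow_neg ha).mul_of_nonneg (summable_add_one_rpow_neg hσ)
    (fun _ ↦ by positivity) (fun _ ↦ by positivity)

theorem summable_zeta2term {s₁ s₂ : ℂ} (h₁ : 1 < s₁.re) (h₂ : 1 < s₂.re) :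
    Summable (zeta2term s₁ s₂) :=
  Summable.of_norm_bounded (summable_add_one_rpow_neg_mul h₁ h₂)
    (norm_zeta2term_le (by linarith) le_rfl)

theorem riemannZeta_sub_one_eq_tsum {s : ℂ} (hs : 1 < s.re) :
    riemannZeta s - 1 = ∑' n : ℕ, ((n : ℂ) + 2) ^ (-s) := by
  have hsum : Summable fun n : ℕ ↦ 1 / ((n : ℂ) + 1) ^ s := by
    simpa using (summable_nat_add_iff 1).mpr (Complex.summable_one_div_nat_cpow.mpr hs)
  rw [zeta_eq_tsum_one_div_nat_add_one_cpow hs, hsum.tsum_eq_zero_add]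
  simp only [Nat.cast_zero, zero_add, one_cpow, div_one, add_sub_cancel_left, Nat.cast_add,
    Nat.cast_one, cpow_neg, one_div]
  refine tsum_congr fun n ↦ ?_
  rw [add_assoc, one_add_one_eq_two]

theorem zeta2_eq_riemannZeta_sub_one_add {s₁ s₂ : ℂ} (h₁ : 1 < s₁.re) (h₂ : 1 < s₂.re) :
    zeta2 s₁ s₂ = (riemannZeta s₂ - 1) + ∑' n : ℕ × ℕ, zeta2term s₁ s₂ (n.1 + 1, n.2) := by
  have hs := summable_zeta2term h₁ h₂
  have hs' : Summable fun n : ℕ × ℕ ↦ zeta2term s₁ s₂ (n.1 + 1, n.2) :=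
    hs.comp_injective fun p q h ↦ by simp_all [Prod.ext_iff]
  rw [zeta2, hs.tsum_prod, hs.prod.tsum_eq_zero_add, hs'.tsum_prod, riemannZeta_sub_one_eq_tsum h₂]
  congr 1
  refine tsum_congr fun n ↦ ?_
  simp [zeta2term]

theorem add_two_rpow_neg_le {t x : ℝ} (ht : 0 ≤ t) (hx : 2 ≤ x) :
    (t + 2) ^ (-x) ≤ 2 ^ (2 - x) * (t + 1) ^ (-2 : ℝ) := by
  calc (t + 2) ^ (-x) = (t + 2) ^ (2 - x) * (t + 2) ^ (-2 : ℝ) := by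
        rw [← Real.rpow_add (by positivity)]; ring_nf
    _ ≤ 2 ^ (2 - x) * (t + 1) ^ (-2 : ℝ) := by
        refine mul_le_mul ?_ ?_ (by positivity) (by positivity)
        · exact Real.rpow_le_rpow_of_nonpos two_pos (by linarith) (by linarith)
        · exact Real.rpow_le_rpow_of_nonpos (by positivity) (by linarith) (by norm_num)

theorem norm_zeta2_sub_riemannZeta_sub_one_le {s₁ s₂ : ℂ} {σ : ℝ} (h₁ : 2 ≤ s₁.re) (hσ : 1 < σ)
    (h₂ : σ ≤ s₂.re) :
    ‖zeta2 s₁ s₂ - (riemannZeta s₂ - 1)‖ ≤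
      2 ^ (2 - s₁.re) * ∑' n : ℕ × ℕ, ((n.1 : ℝ) + 1) ^ (-2 : ℝ) * ((n.2 : ℝ) + 1) ^ (-σ) := by
  rw [zeta2_eq_riemannZeta_sub_one_add (by linarith) (by linarith), add_sub_cancel_left,
    ← tsum_mul_left]
  refine tsum_of_norm_bounded ((summable_add_one_rpow_neg_mul one_lt_two hσ).mul_left _).hasSum
    fun n ↦ (norm_zeta2term_le (by linarith) h₂ _).trans ?_
  rw [← mul_assoc]
  gcongr
  push_cast
  rw [add_assoc, one_add_one_eq_two]
  exact add_two_rpow_neg_le (by positivity) h₁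

theorem differentiableOn_zeta2 {s₁ : ℂ} {σ : ℝ} (h₁ : 1 < s₁.re) (hσ : 1 < σ) :
    DifferentiableOn ℂ (zeta2 s₁) {s | σ < s.re} := by
  refine differentiableOn_tsum_of_summable_norm (summable_add_one_rpow_neg_mul h₁ hσ)
    (fun n ↦ ?_) (isOpen_lt continuous_const continuous_re)
    (fun n s hs ↦ norm_zeta2term_le (by linarith) (le_of_lt hs) n)
  have hn : (n.1 : ℂ) + n.2 + 2 ≠ 0 := by exact_mod_cast (n.1 + n.2 + 1).succ_ne_zero
  exact (differentiable_neg.const_cpow (Or.inl hn)).const_mul _ |>.differentiableOn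

theorem eventually_riemannZeta_ne_one {ρ : ℂ} (hρ : ρ ≠ 1) : ∀ᶠ s in 𝓝[≠] ρ, riemannZeta s ≠ 1 := by
  have hanalytic : AnalyticOnNhd ℂ (fun s ↦ riemannZeta s - 1) {1}ᶜ :=
    DifferentiableOn.analyticOnNhd (fun s hs ↦ ((differentiableAt_riemannZeta hs).sub_const 1)
      |>.differentiableWithinAt) isOpen_compl_singleton
  have hpc : IsPreconnected ({1}ᶜ : Set ℂ) :=
    (isConnected_compl_singleton_of_one_lt_rank (rank_real_complex ▸ Nat.one_lt_ofNat) _)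
      |>.isPreconnected
  have hζ₂ : riemannZeta 2 - 1 ≠ 0 := by
    rw [riemannZeta_two, sub_ne_zero]
    exact_mod_cast (by nlinarith [Real.pi_gt_three] : Real.pi ^ 2 / 6 ≠ 1)
  simp_rw [← sub_ne_zero (b := (1 : ℂ))]
  refine ((hanalytic ρ hρ).eventually_eq_zero_or_eventually_ne_zero).resolve_left fun h ↦ hζ₂ ?_
  exact hanalytic.eqOn_zero_of_preconnected_of_eventuallyEq_zero hpc hρ h (by norm_num)

/-- Conversely: if `Re ρ₂ > 1` and `ζ(ρ₂) = 1`, then for every `ε > 0` there is a zero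
`(s₁, s₂)` of `ζ₂` with `|s₂ − ρ₂| < ε`; moreover `Re s₁` may be taken arbitrarily large. -/
theorem zeros_near_solutions (ρ₂ : ℂ) (hρ : 1 < ρ₂.re) (hζ : riemannZeta ρ₂ = 1) :
    ∀ ε > 0, ∀ M : ℝ, ∃ s₁ s₂ : ℂ, M < s₁.re ∧ 1 < s₂.re ∧
      zeta2 s₁ s₂ = 0 ∧ ‖s₂ - ρ₂‖ < ε := by
  intro ε hε M
  obtain ⟨σ, hσ, hσρ⟩ := exists_between hρ
  have hU : {s : ℂ | σ < s.re} ∈ 𝓝 ρ₂ := (isOpen_lt continuous_const continuous_re).mem_nhds hσρ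
  have hcont : ContinuousOn (fun s ↦ riemannZeta s - 1) {s : ℂ | σ < s.re} := fun s hs ↦
    have hs₁ : s ≠ 1 := ne_of_apply_ne re (by rw [one_re]; exact (hσ.trans hs).ne')
    ((differentiableAt_riemannZeta hs₁).sub_const 1).continuousAt.continuousWithinAt
  obtain ⟨r, hr, hrε, hrU, c, hc, hcle⟩ := exists_closedBall_subset_forall_sphere_le_norm hU hcont
    ((eventually_riemannZeta_ne_one fun h ↦ by simp_all).mono fun _ ↦ sub_ne_zero.mpr) hε
  set B := ∑' n : ℕ × ℕ, ((n.1 : ℝ) + 1) ^ (-2 : ℝ) * ((n.2 : ℝ) + 1) ^ (-σ)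
  have hdecay : Tendsto (fun x : ℝ ↦ 2 ^ (2 - x) * B) atTop (𝓝 0) := by
    simpa [sub_eq_add_neg] using ((tendsto_rpow_atBot_of_base_gt_one 2 one_lt_two).comp
      (tendsto_atBot_add_const_left _ 2 tendsto_neg_atTop_atBot)).mul_const B
  obtain ⟨x, hxM, hx2, hxB⟩ : ∃ x : ℝ, M < x ∧ 2 ≤ x ∧ 2 ^ (2 - x) * B < c / 2 :=
    ((eventually_gt_atTop M).and ((eventually_ge_atTop 2).and
      (hdecay.eventually (gt_mem_nhds (by positivity))))).exists
  obtain ⟨s₂, hs₂, hzero⟩ := exists_mem_closedBall_eq_zero_of_norm_sub_lt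
    (g := fun s ↦ riemannZeta s - 1) hr
    ((differentiableOn_zeta2 (s₁ := x) (by rw [ofReal_re]; linarith) hσ).diffContOnCl_ball hrU)
    (sub_eq_zero.mpr hζ) hcle fun s hs ↦
      (norm_zeta2_sub_riemannZeta_sub_one_le (s₁ := x) (by rwa [ofReal_re]) hσ (hrU hs).le).trans_lt
        (by rwa [ofReal_re])
  exact ⟨x, s₂, by rwa [ofReal_re], hσ.trans (hrU hs₂), hzero,
    (mem_closedBall_iff_norm.mp hs₂).trans_lt hrε⟩
end

section
/- Define F_{r−1}(s₂,…,s_r) = Σ_{j=1}^{r−1} (−1)^{r−j+1} ζ_j(s_{r−j+1},…,s_r) − (−1)^r. Then for r ≥ 2 and complex ρ₂,…,ρ_r each of real part > 1, F_{r−1}(ρ₂,…,ρ_r) equals the absolutely convergent series Σ_{n₂≥1,…,n_r≥1} (1+n₂)^{-ρ₂} (1+n₂+n₃)^{-ρ₃} ⋯ (1+n₂+⋯+n_r)^{-ρ_r}. -/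
/-- The Euler–Zagier `r`-fold zeta-function. -/
noncomputable def ez (r : ℕ) (s : Fin r → ℂ) : ℂ :=
  ∑' n : Fin r → ℕ, ∏ k : Fin r,
    ((∑ i ∈ Finset.Iic k, (n i : ℂ)) + (k : ℕ) + 1) ^ (-(s k))

/-- `F_{r−1}(s₂,…,s_r) = Σ_{j=1}^{r−1} (−1)^{r−j+1} ζ_j(s_{r−j+1},…,s_r) − (−1)^r`.
Here `q = r − 1` and `t = (s₂,…,s_r)`; the `j`-th summand uses the last `j` entries
of `t`, with sign `(−1)^{r−j+1} = (−1)^{q−j+2}`, and `−(−1)^r = −(−1)^{q+1}`. -/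
noncomputable def Fpoly (q : ℕ) (t : Fin q → ℂ) : ℂ :=
  (∑ j ∈ (Finset.Icc 1 q).attach,
      (-1 : ℂ) ^ (q - j.1 + 2) *
        ez j.1 (fun k => t ⟨q - j.1 + k.1, by
          have h1 := j.2
          have h2 := k.isLt
          simp only [Finset.mem_Icc] at h1
          omega⟩)) -
    (-1 : ℂ) ^ (q + 1)


/-!
Write `S_c(t₁,…,t_q) = Σ_{n ∈ ℕ^q} Π_k (n₁+⋯+n_k + k − 1 + c)^{-t_k}`, so that `ζ_q = S_1`.
Splitting the sum for `S_1(t₁,…,t_{q+1})` according to whether `n₁ = 0` or `n₁ ≥ 1` gives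
`ζ_{q+1}(t₁,…,t_{q+1}) = S_2(t₂,…,t_{q+1}) + S_2(t₁,…,t_{q+1})`, hence
`F_{q+1}(t) = ζ_{q+1}(t) − F_q(t₂,…) = S_2(t)` by induction, starting from `F_0 = 1 = S_2()`.
-/

open Finset

theorem Fin.sum_Iic_zero {M : Type*} [AddCommMonoid M] {n : ℕ} (f : Fin (n + 1) → M) :
    ∑ i ∈ Iic 0, f i = f 0 := by
  rw [← bot_eq_zero, Iic_bot, sum_singleton]

theorem Fin.sum_Iic_succ {M : Type*} [AddCommMonoid M] {n : ℕ} (f : Fin (n + 1) → M)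
    (k : Fin n) : ∑ i ∈ Iic k.succ, f i = f 0 + ∑ i ∈ Iic k, f i.succ := by
  rw [← Icc_bot, Icc_eq_cons_Ioc bot_le, Finset.sum_cons, bot_eq_zero, ← map_succEmb_Iic,
    sum_map]
  rfl

theorem Summable.tsum_prod_nat_eq_zero_add {E β : Type*} [AddCommGroup E] [UniformSpace E]
    [IsUniformAddGroup E] [CompleteSpace E] [T0Space E]
    {f : ℕ × β → E} (hf : Summable f) :
    ∑' p, f p = ∑' b, f (0, b) + ∑' p : ℕ × β, f (p.1 + 1, p.2) := by
  have hshift : Summable fun p : ℕ × β => f (p.1 + 1, p.2) :=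
    hf.comp_injective fun p p' h => by
      simp only [Prod.mk.injEq, Nat.add_right_cancel_iff] at h
      exact Prod.ext h.1 h.2
  rw [hf.tsum_prod, hf.prod.tsum_eq_zero_add, hshift.tsum_prod]

theorem summable_fin_prod_of_nonneg {β : Type*} {q : ℕ} {f : Fin q → β → ℝ}
    (hf : ∀ k, Summable (f k)) (hf0 : ∀ k b, 0 ≤ f k b) :
    Summable fun n : Fin q → β => ∏ k, f k (n k) := by
  induction q with
  | zero => exact summable_of_hasFiniteSupport (Set.toFinite _)
  | succ q ih =>
    have htail := ih (fun k => hf k.succ) fun k => hf0 k.succ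
    rw [← (Fin.consEquiv fun _ => β).summable_iff]
    simpa [Function.comp_def, Fin.prod_univ_succ] using (hf 0).mul_of_nonneg htail (hf0 0)
      fun b => prod_nonneg fun k _ => hf0 k.succ (b k)

section ShiftedSeries

variable {q : ℕ}

/-- The summand of `S_c`, with its bases kept in `ℕ`. -/
noncomputable def ezTerm (c : ℕ) (t : Fin q → ℂ) (n : Fin q → ℕ) : ℂ :=
  ∏ k, ((∑ i ∈ Iic k, n i + k + c : ℕ) : ℂ) ^ (-t k)

noncomputable def ezShifted (c : ℕ) (t : Fin q → ℂ) : ℂ :=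
  ∑' n, ezTerm c t n

theorem summable_norm_ezTerm {c : ℕ} (hc : 1 ≤ c) {t : Fin q → ℂ} (ht : ∀ k, 1 < (t k).re) :
    Summable fun n => ‖ezTerm c t n‖ := by
  have hsum : ∀ k, Summable fun m : ℕ => ((m + 1 : ℕ) : ℝ) ^ (-(t k).re) := fun k =>
    (summable_nat_add_iff 1).2 (Real.summable_nat_rpow.2 (by linarith [ht k]))
  refine .of_nonneg_of_le (fun n => norm_nonneg _) (fun n => ?_)
    (summable_fin_prod_of_nonneg hsum fun k m => by positivity)
  rw [ezTerm, norm_prod]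
  refine prod_le_prod (fun k _ => norm_nonneg _) fun k _ => ?_
  have hle : n k + 1 ≤ ∑ i ∈ Iic k, n i + k + c := by
    have := single_le_sum (f := n) (fun i _ => Nat.zero_le (n i)) (mem_Iic.2 (le_refl k))
    omega
  rw [Complex.norm_natCast_cpow_of_pos (by omega), Complex.neg_re]
  exact Real.rpow_le_rpow_of_nonpos (by positivity) (by exact_mod_cast hle)
    (by linarith [ht k])

theorem ezTerm_cons_zero (t : Fin (q + 1) → ℂ) (b : Fin q → ℕ) :
    ezTerm 1 t (Fin.cons 0 b) = ezTerm 2 (Fin.tail t) b := by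
  simp only [ezTerm, Fin.prod_univ_succ, Fin.sum_Iic_zero, Fin.sum_Iic_succ, Fin.cons_zero,
    Fin.cons_succ]
  simp [Fin.tail, Fin.val_succ, add_assoc]

theorem ezTerm_cons_succ (t : Fin (q + 1) → ℂ) (a : ℕ) (b : Fin q → ℕ) :
    ezTerm 1 t (Fin.cons (a + 1) b) = ezTerm 2 t (Fin.cons a b) := by
  have hpartial : ∀ k : Fin (q + 1), ∑ i ∈ Iic k, (Fin.cons (a + 1) b : Fin (q + 1) → ℕ) i =
      ∑ i ∈ Iic k, (Fin.cons a b : Fin (q + 1) → ℕ) i + 1 := by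
    refine Fin.cases ?_ fun j => ?_
    · simp only [Fin.sum_Iic_zero, Fin.cons_zero]
    · simp only [Fin.sum_Iic_succ, Fin.cons_zero, Fin.cons_succ]
      ring
  refine prod_congr rfl fun k _ => ?_
  rw [hpartial, add_right_comm _ 1, add_assoc _ 1]

theorem ez_eq_ezShifted (t : Fin q → ℂ) : ez q t = ezShifted 1 t := by
  simp [ez, ezShifted, ezTerm]

theorem ezShifted_two_eq (t : Fin q → ℂ) :
    ezShifted 2 t = ∑' n : Fin q → ℕ, ∏ k : Fin q,
        ((∑ i ∈ Finset.Iic k, (n i : ℂ)) + (k : ℕ) + 2) ^ (-(t k)) := by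
  simp [ezShifted, ezTerm]

theorem ezShifted_fin_zero (c : ℕ) (t : Fin 0 → ℂ) : ezShifted c t = 1 := by
  simp [ezShifted, ezTerm]

theorem ezShifted_one_eq {t : Fin (q + 1) → ℂ} (ht : ∀ k, 1 < (t k).re) :
    ezShifted 1 t = ezShifted 2 (Fin.tail t) + ezShifted 2 t := by
  let e := Fin.consEquiv fun _ : Fin (q + 1) => ℕ
  have hsum : Summable (ezTerm 1 t ∘ e) :=
    e.summable_iff.2 (summable_norm_ezTerm le_rfl ht).of_norm
  calc ezShifted 1 t = ∑' p, ezTerm 1 t (e p) := (e.tsum_eq _).symm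
    _ = ∑' b, ezTerm 1 t (Fin.cons 0 b) +
          ∑' p : ℕ × (Fin q → ℕ), ezTerm 1 t (Fin.cons (p.1 + 1) p.2) :=
      hsum.tsum_prod_nat_eq_zero_add
    _ = ezShifted 2 (Fin.tail t) + ∑' p, ezTerm 2 t (e p) := by
      simp only [ezTerm_cons_zero, ezTerm_cons_succ]
      rfl
    _ = ezShifted 2 (Fin.tail t) + ezShifted 2 t := by rw [e.tsum_eq]; rfl

end ShiftedSeries

/-- The last `j` entries of `t`; the junk value `0` only occurs when `j > q`. -/
noncomputable def lastEntries (q j : ℕ) (t : Fin q → ℂ) : Fin j → ℂ :=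
  fun k => if h : q - j + k < q then t ⟨q - j + k, h⟩ else 0

theorem Fpoly_eq_sum_lastEntries (q : ℕ) (t : Fin q → ℂ) :
    Fpoly q t = ∑ j ∈ Icc 1 q, (-1 : ℂ) ^ (q - j + 2) * ez j (lastEntries q j t) -
      (-1) ^ (q + 1) := by
  rw [Fpoly, ← sum_attach (Icc 1 q)]
  congr 1
  refine sum_congr rfl fun j _ => congrArg _ (congrArg _ (funext fun k => ?_))
  have hj := mem_Icc.1 j.2
  rw [lastEntries, dif_pos (by omega)]

theorem Fpoly_succ (q : ℕ) (t : Fin (q + 1) → ℂ) :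
    Fpoly (q + 1) t = ez (q + 1) t - Fpoly q (Fin.tail t) := by
  have hlast : lastEntries (q + 1) (q + 1) t = t := funext fun k => by
    simp [lastEntries, k.is_lt]
  have hrest : ∀ j ∈ Icc 1 q, (-1 : ℂ) ^ (q + 1 - j + 2) * ez j (lastEntries (q + 1) j t) =
      -((-1) ^ (q - j + 2) * ez j (lastEntries q j (Fin.tail t))) := by
    intro j hj
    have hj := mem_Icc.1 hj
    have htail : lastEntries (q + 1) j t = lastEntries q j (Fin.tail t) := funext fun k => by
      rw [lastEntries, lastEntries, dif_pos (by omega), dif_pos (by omega)]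
      exact congrArg t (Fin.ext (by simp; omega))
    rw [htail, show q + 1 - j + 2 = q - j + 2 + 1 by omega, pow_succ]
    ring
  rw [Fpoly_eq_sum_lastEntries, Fpoly_eq_sum_lastEntries, sum_Icc_succ_top (by omega),
    sum_congr rfl hrest, hlast, sum_neg_distrib]
  simp only [Nat.sub_self, pow_succ]
  ring

theorem Fpoly_zero (t : Fin 0 → ℂ) : Fpoly 0 t = 1 := by
  simp [Fpoly_eq_sum_lastEntries]

theorem Fpoly_eq_ezShifted {q : ℕ} {t : Fin q → ℂ} (ht : ∀ k, 1 < (t k).re) :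
    Fpoly q t = ezShifted 2 t := by
  induction q with
  | zero => rw [Fpoly_zero, ezShifted_fin_zero]
  | succ q ih =>
    rw [Fpoly_succ, ih (t := Fin.tail t) fun k => ht k.succ, ez_eq_ezShifted, ezShifted_one_eq ht]
    ring

theorem Fpoly_eq_series_general (q : ℕ) (t : Fin q → ℂ)
    (ht : ∀ i, 1 < (t i).re) :
    Summable (fun n : Fin q → ℕ =>
      ‖∏ k : Fin q, ((∑ i ∈ Finset.Iic k, (n i : ℂ)) + (k : ℕ) + 2) ^ (-(t k))‖) ∧
    Fpoly q t =
      ∑' n : Fin q → ℕ, ∏ k : Fin q,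
        ((∑ i ∈ Finset.Iic k, (n i : ℂ)) + (k : ℕ) + 2) ^ (-(t k)) := by
  refine ⟨?_, (Fpoly_eq_ezShifted ht).trans (ezShifted_two_eq t)⟩
  simpa [ezTerm] using summable_norm_ezTerm (c := 2) (by norm_num) ht

/-- For `r ≥ 2` (i.e. `q = r − 1 ≥ 1`) and `Re ρ_k > 1` for all `k`,
`F_{r−1}(ρ₂,…,ρ_r)` equals the absolutely convergent series
`Σ_{n₂,…,n_r ≥ 1} (1+n₂)^{-ρ₂}(1+n₂+n₃)^{-ρ₃}⋯(1+n₂+⋯+n_r)^{-ρ_r}`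
(here indexed by `n : Fin q → ℕ`, with `1 + n₂ + ⋯ + n_{k+2} = (Σ_{i≤k} n_i) + k + 2`). -/
theorem Fpoly_eq_series (q : ℕ) (hq : 1 ≤ q) (t : Fin q → ℂ)
    (ht : ∀ i, 1 < (t i).re) :
    Summable (fun n : Fin q → ℕ =>
      ‖∏ k : Fin q, ((∑ i ∈ Finset.Iic k, (n i : ℂ)) + (k : ℕ) + 2) ^ (-(t k))‖) ∧
    Fpoly q t =
      ∑' n : Fin q → ℕ, ∏ k : Fin q,
        ((∑ i ∈ Finset.Iic k, (n i : ℂ)) + (k : ℕ) + 2) ^ (-(t k)) :=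
  Fpoly_eq_series_general q t ht
end
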